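/- Let 0 < α ≤ 1 and let u : [0,π] → ℂ satisfy a Hölder condition of order α, i.e. there is C > 0 with |u(x) − u(y)| ≤ C·|x−y|^α for all x, y ∈ [0,π]. For n ≥ 1 set r_n := (2/π)·∫₀^π u(t)·cos(2nt)·(∫₀ᵗ u(s)·sin(2ns) ds) dt + (1/(2πn))·∫₀^π u(t)² dt. Then there exists M > 0 such that |r_n| ≤ M·n^{−2α} for all n ≥ 1. -/

import Mathlib

/-!
Put `h = π / (2n)`, a half period of `sin (2n·)` and `cos (2n·)`. Integrating by parts and
exchanging the order of integration over the triangle `0 ≤ τ ≤ t ≤ π` gives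
`2π rₙ = 2 I J - D`, where `I`, `J` are the sine and cosine coefficients of `u` and
`D = 2 ∫₀^π sin (2nτ) G(τ) dτ - G(0) / n` with the autocorrelation `G(τ) = ∫_τ^π u(t) u(t - τ) dt`.
Against an `h`-antiperiodic kernel an integral is bounded by the `h`-differences of the integrand,
up to boundary terms of size `h`; hence `I, J = O(h^α)`. Up to a term of size `h`, the
`h`-difference of `G` is the cross-correlation of `u - u(· - h)` with `u`, and the `h`-difference
of that puts a second such factor in, so `D = O(h^{2α})`. The term `G(0) / n` cancels the
boundary term of `G` at `τ = 0`. To use the Hölder bound at every point, `u` is first extended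
constantly outside `[0, π]`.
-/

open MeasureTheory Set

/-- `r_n = (2/π)∫₀^π u(t)cos(2nt)(∫₀ᵗ u(s)sin(2ns) ds) dt + (1/(2πn))∫₀^π u² dt`. -/
noncomputable def rseq (u : ℝ → ℂ) (n : ℕ) : ℂ :=
  (2 / (Real.pi : ℂ)) * (∫ t in (0:ℝ)..Real.pi, u t * Complex.cos (2 * (n:ℂ) * t) *
      (∫ s in (0:ℝ)..t, u s * Complex.sin (2 * (n:ℂ) * s)))
  + (1 / (2 * (Real.pi : ℂ) * n)) * ∫ t in (0:ℝ)..Real.pi, (u t) ^ 2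

open Filter Topology intervalIntegral Function

theorem continuous_of_norm_sub_le_rpow {E : Type*} [SeminormedAddCommGroup E] {v : ℝ → E}
    {C α : ℝ} (hα : 0 < α) (hv : ∀ x y, ‖v x - v y‖ ≤ C * |x - y| ^ α) : Continuous v := by
  refine continuous_iff_continuousAt.2 fun x => tendsto_iff_norm_sub_tendsto_zero.2 ?_
  have hlim : Tendsto (fun y => C * |y - x| ^ α) (𝓝 x) (𝓝 0) := by
    have : Continuous fun y => C * |y - x| ^ α := by fun_prop (disch := positivity)
    simpa [Real.zero_rpow hα.ne'] using this.tendsto x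
  exact squeeze_zero (fun _ => norm_nonneg _) (fun y => hv y x) hlim

theorem norm_IccExtend_sub_le {E : Type*} [SeminormedAddCommGroup E] {a b C α : ℝ} (hab : a ≤ b)
    (hC : 0 ≤ C) (hα : 0 ≤ α) {u : ℝ → E}
    (hu : ∀ x ∈ Icc a b, ∀ y ∈ Icc a b, ‖u x - u y‖ ≤ C * |x - y| ^ α) (x y : ℝ) :
    ‖IccExtend hab (u ∘ Subtype.val) x - IccExtend hab (u ∘ Subtype.val) y‖
      ≤ C * |x - y| ^ α :=
  (hu _ (projIcc a b hab x).2 _ (projIcc a b hab y).2).trans <|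
    mul_le_mul_of_nonneg_left (Real.rpow_le_rpow (abs_nonneg _) (abs_projIcc_sub_projIcc hab) hα) hC

theorem le_two_mul_rpow {x α : ℝ} (hx : 0 ≤ x) (hx2 : x ≤ 2) (hα0 : 0 ≤ α) (hα1 : α ≤ 1) :
    x ≤ 2 * x ^ α := by
  have h := Real.self_le_rpow_of_le_one (by positivity : 0 ≤ x / 2) (by linarith) hα1
  rw [Real.div_rpow hx zero_le_two, le_div_iff₀ (by positivity)] at h
  nlinarith [Real.one_le_rpow one_le_two hα0]

theorem norm_intervalIntegral_le_of_norm_le_const {E : Type*} [NormedAddCommGroup E]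
    [NormedSpace ℝ E] {f : ℝ → E} {a b K : ℝ} (hab : a ≤ b) (hf : ∀ x ∈ Ioc a b, ‖f x‖ ≤ K) :
    ‖∫ x in a..b, f x‖ ≤ K * (b - a) := by
  simpa [abs_of_nonneg (sub_nonneg.2 hab)] using
    norm_integral_le_of_norm_le_const (fun x hx => hf x (uIoc_of_le hab ▸ hx))

section Oscillation

variable {S φ : ℝ → ℂ} {h a b : ℝ}

theorem two_mul_integral_antiperiodic_mul (hS : Antiperiodic S h) (hSc : Continuous S)
    (hφ : Continuous φ) :
    2 * ∫ τ in a..b, S τ * φ τ = (∫ τ in a + h..b, S τ * (φ τ - φ (τ - h)))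
      + (∫ τ in a..a + h, S τ * φ τ) - ∫ τ in b..b + h, S τ * φ (τ - h) := by
  have hint : ∀ ψ : ℝ → ℂ, Continuous ψ → ∀ c d,
      IntervalIntegrable (fun τ => S τ * ψ τ) volume c d :=
    fun ψ hψ c d => (hSc.mul hψ).intervalIntegrable c d
  have hφh : Continuous fun τ => φ (τ - h) := hφ.comp (continuous_sub_right h)
  have hshift : ∫ τ in a + h..b + h, S τ * φ (τ - h) = -∫ τ in a..b, S τ * φ τ := by
    rw [← integral_comp_add_right, ← intervalIntegral.integral_neg]
    simp [hS _]
  have hsub : ∫ τ in a + h..b, S τ * (φ τ - φ (τ - h))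
      = (∫ τ in a + h..b, S τ * φ τ) - ∫ τ in a + h..b, S τ * φ (τ - h) := by
    simp_rw [mul_sub]
    exact integral_sub (hint φ hφ _ _) (hint _ hφh _ _)
  have hsplit := integral_add_adjacent_intervals (hint φ hφ a (a + h)) (hint φ hφ (a + h) b)
  have hsplit' := integral_add_adjacent_intervals (hint _ hφh (a + h) b) (hint _ hφh b (b + h))
  linear_combination hsplit' + hshift - hsplit - hsub

theorem norm_integral_antiperiodic_mul_le (hS : Antiperiodic S h) (hSc : Continuous S)
    (hS1 : ∀ τ, ‖S τ‖ ≤ 1) (hφ : Continuous φ) (hh : 0 ≤ h) (hab : a + h ≤ b) {B ε : ℝ}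
    (hB : ∀ τ ∈ Icc a b, ‖φ τ‖ ≤ B) (hε : ∀ τ ∈ Icc (a + h) b, ‖φ τ - φ (τ - h)‖ ≤ ε) :
    ‖∫ τ in a..b, S τ * φ τ‖ ≤ ((b - a) * ε + 2 * h * B) / 2 := by
  have hε0 : 0 ≤ ε := (norm_nonneg _).trans (hε _ ⟨le_rfl, hab⟩)
  have hSψ : ∀ {c d K : ℝ} {ψ : ℝ → ℂ}, c ≤ d → (∀ τ ∈ Ioc c d, ‖ψ τ‖ ≤ K) →
      ‖∫ τ in c..d, S τ * ψ τ‖ ≤ K * (d - c) := fun hcd hψ =>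
    norm_intervalIntegral_le_of_norm_le_const hcd fun τ hτ =>
      (norm_mul_le _ _).trans <| (mul_le_of_le_one_left (norm_nonneg _) (hS1 τ)).trans (hψ τ hτ)
  have hmid := hSψ hab fun τ hτ => hε τ (Ioc_subset_Icc_self hτ)
  have hleft := hSψ (le_add_of_nonneg_right hh) fun τ hτ => hB τ ⟨hτ.1.le, by linarith [hτ.2]⟩
  have hright := hSψ (le_add_of_nonneg_right hh : b ≤ b + h) fun τ hτ =>
    hB (τ - h) ⟨by linarith [hτ.1], by linarith [hτ.2]⟩
  have h2 : ‖2 * ∫ τ in a..b, S τ * φ τ‖ ≤ (b - a) * ε + 2 * h * B := by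
    rw [two_mul_integral_antiperiodic_mul hS hSc hφ]
    refine (norm_sub_le _ _).trans ((add_le_add_left (norm_add_le _ _) _).trans ?_)
    nlinarith
  rw [norm_mul, Complex.norm_two] at h2
  linarith

theorem two_mul_integral_antiperiodic_mul_sub (hS : Antiperiodic S h) (hSc : Continuous S)
    (hφ : Continuous φ) :
    2 * (∫ τ in 0..b, S τ * φ τ) - (∫ τ in 0..h, S τ) * φ 0
      = (∫ τ in h..b, S τ * (φ τ - φ (τ - h))) + (∫ τ in 0..h, S τ * (φ τ - φ 0))
        - ∫ τ in b..b + h, S τ * φ (τ - h) := by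
  have hsplit : ∫ τ in 0..h, S τ * φ τ
      = (∫ τ in 0..h, S τ) * φ 0 + ∫ τ in 0..h, S τ * (φ τ - φ 0) := by
    simp_rw [← intervalIntegral.integral_mul_const, mul_sub]
    rw [integral_sub (f := fun τ => S τ * φ τ) (g := fun τ => S τ * φ 0)
      ((hSc.mul hφ).intervalIntegrable _ _) ((hSc.mul continuous_const).intervalIntegrable _ _)]
    ring
  rw [two_mul_integral_antiperiodic_mul hS hSc hφ, zero_add, hsplit]
  ring

end Oscillation

theorem integral_integral_triangle_swap {E : Type*} [NormedAddCommGroup E] [NormedSpace ℝ E]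
    {H : ℝ → ℝ → E} (hH : Continuous (uncurry H)) {a b : ℝ} (hab : a ≤ b) :
    ∫ t in a..b, ∫ τ in a..t, H t τ = ∫ τ in a..b, ∫ t in τ..b, H t τ := by
  set F : ℝ → ℝ → E := fun t => indicator {τ | τ ≤ t} (H t)
  have hF : IntegrableOn (uncurry F) (uIoc a b ×ˢ uIoc a b) := by
    have : uncurry F = indicator {p : ℝ × ℝ | p.2 ≤ p.1} (uncurry H) := by
      ext ⟨t, τ⟩
      simp [F, indicator]
    rw [this]
    refine IntegrableOn.indicator ?_ (measurableSet_le measurable_snd measurable_fst)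
    rw [uIoc_of_le hab]
    exact (hH.continuousOn.integrableOn_compact (isCompact_Icc.prod isCompact_Icc)).mono_set
      (prod_mono Ioc_subset_Icc_self Ioc_subset_Icc_self)
  have hinner : ∀ t ∈ uIcc a b, ∫ τ in a..b, F t τ = ∫ τ in a..t, H t τ := fun t ht =>
    integral_indicator (uIcc_of_le hab ▸ ht)
  have houter : ∀ τ ∈ uIoc a b, ∫ t in a..b, F t τ = ∫ t in τ..b, H t τ := by
    intro τ hτ
    rw [uIoc_of_le hab] at hτ
    have : Ioc a b ∩ Ici τ = Icc τ b := by
      ext x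
      simp only [mem_inter_iff, mem_Ioc, mem_Ici, mem_Icc]
      exact ⟨fun ⟨⟨_, hxb⟩, hτx⟩ => ⟨hτx, hxb⟩, fun ⟨hτx, hxb⟩ => ⟨⟨hτ.1.trans_le hτx, hxb⟩, hτx⟩⟩
    have hFτ : (fun t => F t τ) = indicator (Ici τ) fun t => H t τ := by
      ext t
      simp [F, indicator]
    rw [hFτ, integral_of_le hab, setIntegral_indicator measurableSet_Ici, this,
      integral_Icc_eq_integral_Ioc, ← integral_of_le hτ.2]
  rw [← integral_congr hinner, intervalIntegral_intervalIntegral_swap hF,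
    integral_congr_ae (Eventually.of_forall houter)]

noncomputable def crossCorr (f g : ℝ → ℂ) (b τ : ℝ) : ℂ := ∫ t in τ..b, f t * g (t - τ)

section CrossCorrelation

variable {f g v : ℝ → ℂ} {b τ s A B ε : ℝ}

theorem continuous_crossCorr (hf : Continuous f) (hg : Continuous g) :
    Continuous (crossCorr f g b) := by
  have : crossCorr f g b = fun τ => -∫ t in b..τ, f t * g (t - τ) := by
    ext τ
    exact integral_symm _ _
  rw [this]
  exact (continuous_parametric_intervalIntegral_of_continuous (a₀ := b)
    (f := fun τ t => f t * g (t - τ)) (by fun_prop) continuous_id).neg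

theorem norm_crossCorr_le (hτ : τ ≤ b) (hf : ∀ x, ‖f x‖ ≤ A) (hg : ∀ x, ‖g x‖ ≤ B) :
    ‖crossCorr f g b τ‖ ≤ A * B * (b - τ) :=
  norm_intervalIntegral_le_of_norm_le_const hτ fun t _ => norm_mul_le_of_le (hf t) (hg _)

theorem norm_crossCorr_sub_le (hf : Continuous f) (hg : Continuous g) (hs : 0 ≤ s) (hτ : τ ≤ b)
    (hfA : ∀ x, ‖f x‖ ≤ A) (hgB : ∀ x, ‖g x‖ ≤ B) (hgε : ∀ x, ‖g x - g (x + s)‖ ≤ ε) :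
    ‖crossCorr f g b τ - crossCorr f g b (τ - s)‖ ≤ A * ε * (b - τ) + A * B * s := by
  have hint : ∀ c, Continuous fun t => f t * g (t - c) := fun c => by fun_prop
  have hsplit : crossCorr f g b (τ - s) = (∫ t in τ - s..τ, f t * g (t - (τ - s)))
      + ∫ t in τ..b, f t * g (t - (τ - s)) :=
    (integral_add_adjacent_intervals ((hint _).intervalIntegrable _ _)
      ((hint _).intervalIntegrable _ _)).symm
  have hdiff : crossCorr f g b τ - crossCorr f g b (τ - s) =
      (∫ t in τ..b, f t * (g (t - τ) - g (t - τ + s)))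
        - ∫ t in τ - s..τ, f t * g (t - (τ - s)) := by
    have hsub : ∫ t in τ..b, f t * (g (t - τ) - g (t - τ + s))
        = crossCorr f g b τ - ∫ t in τ..b, f t * g (t - (τ - s)) := by
      simp_rw [mul_sub, sub_add]
      exact integral_sub ((hint τ).intervalIntegrable _ _) ((hint _).intervalIntegrable _ _)
    linear_combination -hsplit - hsub
  rw [hdiff]
  refine (norm_sub_le _ _).trans (add_le_add ?_ ?_)
  · exact norm_intervalIntegral_le_of_norm_le_const hτ fun t _ => norm_mul_le_of_le (hfA t) (hgε _)
  · simpa using norm_intervalIntegral_le_of_norm_le_const (by linarith : τ - s ≤ τ)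
      fun t _ => norm_mul_le_of_le (hfA t) (hgB _)

theorem crossCorr_self_sub_shift (hv : Continuous v) (τ s : ℝ) :
    crossCorr v v b τ - crossCorr v v b (τ - s) =
      crossCorr (fun t => v t - v (t - s)) v b τ - ∫ t in b..b + s, v (t - s) * v (t - τ) := by
  have hint : ∀ c d, IntervalIntegrable (fun t => v (t - s) * v (t - τ)) volume c d :=
    fun _ _ => (by fun_prop : Continuous fun t => v (t - s) * v (t - τ)).intervalIntegrable _ _
  have hshift : crossCorr v v b (τ - s) = ∫ t in τ..b + s, v (t - s) * v (t - τ) :=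
    calc crossCorr v v b (τ - s) = ∫ t in τ - s..b + s - s, v t * v (t - (τ - s)) := by
          rw [add_sub_cancel_right, crossCorr]
      _ = ∫ t in τ..b + s, v (t - s) * v (t - s - (τ - s)) :=
          (integral_comp_sub_right (fun t => v t * v (t - (τ - s))) s).symm
      _ = _ := by simp_rw [sub_sub_sub_cancel_right]
  have hsub : crossCorr (fun t => v t - v (t - s)) v b τ
      = crossCorr v v b τ - ∫ t in τ..b, v (t - s) * v (t - τ) := by
    simp_rw [crossCorr, sub_mul]
    exact integral_sub ((by fun_prop : Continuous fun t => v t * v (t - τ)).intervalIntegrable _ _)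
      (hint _ _)
  rw [hshift, ← integral_add_adjacent_intervals (hint τ b) (hint b (b + s)), hsub]
  ring

theorem norm_crossCorr_self_second_sub_le (hv : Continuous v) (hs : 0 ≤ s) (hτ : τ ≤ b)
    (hB : ∀ x, ‖v x‖ ≤ B) (hε : ∀ x, ‖v x - v (x + s)‖ ≤ ε) :
    ‖(crossCorr v v b τ - crossCorr v v b (τ - s))
        - (crossCorr v v b (τ - s) - crossCorr v v b (τ - s - s))‖
      ≤ ε * ε * (b - τ) + 2 * (ε * B * s) := by
  have hw : ∀ x, ‖v x - v (x - s)‖ ≤ ε := fun x => by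
    simpa [norm_sub_rev] using hε (x - s)
  set R : ℝ → ℂ := fun σ => ∫ t in b..b + s, v (t - s) * v (t - σ)
  have hR : ‖R τ - R (τ - s)‖ ≤ ε * B * s := by
    simp only [R]
    rw [← integral_sub
      ((by fun_prop : Continuous fun t => v (t - s) * v (t - τ)).intervalIntegrable _ _)
      ((by fun_prop : Continuous fun t => v (t - s) * v (t - (τ - s))).intervalIntegrable _ _)]
    simpa [mul_comm ε, ← mul_sub, sub_add] using
      norm_intervalIntegral_le_of_norm_le_const (le_add_of_nonneg_right hs)
        fun t _ => norm_mul_le_of_le (hB (t - s)) (hε (t - τ))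
  have hΓ := norm_crossCorr_sub_le (b := b) (by fun_prop) hv hs hτ hw hB hε
  rw [crossCorr_self_sub_shift hv τ s, crossCorr_self_sub_shift hv (τ - s) s, sub_sub_sub_comm]
  exact (norm_sub_le _ _).trans (by linarith)

end CrossCorrelation

theorem norm_integral_antiperiodic_mul_crossCorr_sub_le {S v : ℝ → ℂ} {h b B ε : ℝ}
    (hS : Antiperiodic S h) (hSc : Continuous S) (hS1 : ∀ τ, ‖S τ‖ ≤ 1) (hv : Continuous v)
    (hB : ∀ x, ‖v x‖ ≤ B) (hε : ∀ x, ‖v x - v (x + h)‖ ≤ ε) (hh : 0 ≤ h) (hhb : 2 * h ≤ b) :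
    ‖∫ τ in h..b, S τ * (crossCorr v v b τ - crossCorr v v b (τ - h))‖
      ≤ ((b - h) * (ε * ε * b + 2 * (ε * B * h)) + 2 * h * (B * ε * b + B * B * h)) / 2 := by
  have hB0 : 0 ≤ B := (norm_nonneg _).trans (hB 0)
  have hε0 : 0 ≤ ε := (norm_nonneg _).trans (hε 0)
  have hGc : Continuous (crossCorr v v b) := continuous_crossCorr hv hv
  refine norm_integral_antiperiodic_mul_le (a := h) hS hSc hS1
    (hGc.sub (hGc.comp (continuous_sub_right h))) hh (by linarith) (fun τ hτ => ?_)
    (fun τ hτ => ?_)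
  · refine (norm_crossCorr_sub_le hv hv hh hτ.2 hB hB hε).trans ?_
    nlinarith [mul_nonneg (mul_nonneg hB0 hε0) (hh.trans hτ.1)]
  · refine (norm_crossCorr_self_second_sub_le hv hh hτ.2 hB hε).trans ?_
    nlinarith [hτ.1, mul_nonneg hε0 hε0]

theorem norm_two_mul_integral_antiperiodic_mul_crossCorr_sub_le {S v : ℝ → ℂ} {h b B ε : ℝ}
    (hS : Antiperiodic S h) (hSc : Continuous S) (hS1 : ∀ τ, ‖S τ‖ ≤ 1) (hv : Continuous v)
    (hB : ∀ x, ‖v x‖ ≤ B) (hε : ∀ x y, |x - y| ≤ h → ‖v x - v y‖ ≤ ε) (hh : 0 ≤ h)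
    (hhb : 2 * h ≤ b) :
    ‖2 * (∫ τ in 0..b, S τ * crossCorr v v b τ) - (∫ τ in 0..h, S τ) * crossCorr v v b 0‖
      ≤ (b ^ 2 / 2 + 3 * b + 3) * (ε + B * h) ^ 2 := by
  set G := crossCorr v v b
  have hGc : Continuous G := continuous_crossCorr hv hv
  have hB0 : 0 ≤ B := (norm_nonneg _).trans (hB 0)
  have hε0 : 0 ≤ ε := (norm_nonneg _).trans (hε 0 0 (by simpa using hh))
  have hεs : ∀ s, 0 ≤ s → s ≤ h → ∀ x, ‖v x - v (x + s)‖ ≤ ε := fun s hs hsh x =>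
    hε _ _ (by rwa [sub_add_cancel_left, abs_neg, abs_of_nonneg hs])
  have hS_mul : ∀ {τ K : ℝ} {z : ℂ}, ‖z‖ ≤ K → ‖S τ * z‖ ≤ K := fun hz =>
    (norm_mul_le_of_le (hS1 _) hz).trans_eq (one_mul _)
  have hT1 := norm_integral_antiperiodic_mul_crossCorr_sub_le hS hSc hS1 hv hB
    (hεs h hh le_rfl) hh hhb
  have hT2 : ‖∫ τ in 0..h, S τ * (G τ - G 0)‖ ≤ (B * ε * b + B * B * h) * (h - 0) := by
    refine norm_intervalIntegral_le_of_norm_le_const hh fun τ hτ => hS_mul ?_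
    have := norm_crossCorr_sub_le (b := b) (τ := τ) (s := τ) hv hv hτ.1.le (by linarith [hτ.2])
      hB hB (hεs τ hτ.1.le hτ.2)
    rw [sub_self] at this
    refine this.trans ?_
    nlinarith [mul_nonneg (mul_nonneg hB0 hε0) hτ.1.le,
      mul_le_mul_of_nonneg_left hτ.2 (mul_nonneg hB0 hB0)]
  have hT3 : ‖∫ τ in b..b + h, S τ * G (τ - h)‖ ≤ B * B * h * (b + h - b) := by
    refine norm_intervalIntegral_le_of_norm_le_const (by linarith) fun τ hτ => hS_mul ?_
    refine (norm_crossCorr_le (by linarith [hτ.2]) hB hB).trans ?_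
    nlinarith [hτ.1]
  rw [two_mul_integral_antiperiodic_mul_sub hS hSc hGc]
  refine (norm_sub_le _ _).trans ((add_le_add_left (norm_add_le _ _) _).trans ?_)
  have hb : 0 ≤ b := by linarith
  have hq : 0 ≤ B * h := mul_nonneg hB0 hh
  have hεε : ε * ε ≤ (ε + B * h) ^ 2 := by nlinarith
  have hεq : ε * (B * h) ≤ (ε + B * h) ^ 2 := by nlinarith
  have hX : 0 ≤ ε * ε * b + 2 * (ε * B * h) := by positivity
  nlinarith [mul_nonneg hh hX, mul_le_mul_of_nonneg_left hεε (sq_nonneg b),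
    mul_le_mul_of_nonneg_left hεq hb]

theorem two_mul_integral_mul_cos_mul_primitive {v : ℝ → ℂ} {b : ℝ} (hv : Continuous v)
    (hb : 0 ≤ b) (k : ℂ) :
    2 * ∫ t in 0..b, v t * Complex.cos (k * t) * ∫ s in 0..t, v s * Complex.sin (k * s)
      = (∫ t in 0..b, v t * Complex.sin (k * t)) * (∫ t in 0..b, v t * Complex.cos (k * t))
        - ∫ τ in 0..b, Complex.sin (k * τ) * crossCorr v v b τ := by
  set f : ℝ → ℂ := fun t => v t * Complex.sin (k * t)
  set g : ℝ → ℂ := fun t => v t * Complex.cos (k * t)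
  set I : ℝ → ℂ := fun t => ∫ s in 0..t, f s
  set J : ℝ → ℂ := fun t => ∫ s in 0..t, g s
  have hf : Continuous f := by fun_prop
  have hg : Continuous g := by fun_prop
  have hI : ∀ t, HasDerivAt I (f t) t := fun t => (hf.integral_hasStrictDerivAt 0 t).hasDerivAt
  have hJ : ∀ t, HasDerivAt J (g t) t := fun t => (hg.integral_hasStrictDerivAt 0 t).hasDerivAt
  have hIc : Continuous I := continuous_iff_continuousAt.2 fun t => (hI t).continuousAt
  have hJc : Continuous J := continuous_iff_continuousAt.2 fun t => (hJ t).continuousAt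
  have hparts : ∫ t in 0..b, I t * g t = I b * J b - ∫ t in 0..b, f t * J t := by
    simpa [I, J] using integral_mul_deriv_eq_deriv_mul (fun t _ => hI t) (fun t _ => hJ t)
      (hf.intervalIntegrable 0 b) (hg.intervalIntegrable 0 b)
  have hkernel : ∀ t, f t * J t - I t * g t
      = ∫ τ in 0..t, Complex.sin (k * τ) * (v t * v (t - τ)) := by
    intro t
    have hsin : ∀ s : ℝ, f t * g s - f s * g t = v t * v s * Complex.sin (k * ↑(t - s)) := by
      intro s
      simp only [f, g, Complex.ofReal_sub, mul_sub, Complex.sin_sub]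
      ring
    calc f t * J t - I t * g t = ∫ s in 0..t, f t * g s - f s * g t := by
          rw [intervalIntegral.integral_sub
            ((by fun_prop : Continuous fun s => f t * g s).intervalIntegrable _ _)
            ((by fun_prop : Continuous fun s => f s * g t).intervalIntegrable _ _),
            intervalIntegral.integral_const_mul, intervalIntegral.integral_mul_const]
      _ = ∫ τ in 0..t, v t * v (t - τ) * Complex.sin (k * ↑(t - (t - τ))) := by
          simp_rw [hsin]
          rw [integral_comp_sub_left (fun s => v t * v s * Complex.sin (k * ↑(t - s))), sub_self,
            sub_zero]
      _ = _ := by simp_rw [sub_sub_cancel, mul_comm]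
  have hswap : ∫ t in 0..b, f t * J t - I t * g t
      = ∫ τ in 0..b, Complex.sin (k * τ) * crossCorr v v b τ := by
    simp_rw [hkernel, crossCorr, ← intervalIntegral.integral_const_mul]
    exact integral_integral_triangle_swap (by fun_prop) hb
  rw [intervalIntegral.integral_sub
    ((by fun_prop : Continuous fun t => f t * J t).intervalIntegrable _ _)
    ((by fun_prop : Continuous fun t => I t * g t).intervalIntegrable _ _)] at hswap
  have hcomm : ∫ t in 0..b, v t * Complex.cos (k * t) * I t = ∫ t in 0..b, I t * g t := by
    simp_rw [g, mul_comm]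
  rw [hcomm]
  linear_combination hparts - hswap

section Kernels

variable {n : ℕ}

theorem antiperiodic_sin_two_mul (hn : n ≠ 0) :
    Antiperiodic (fun τ : ℝ => Complex.sin (2 * n * τ)) (Real.pi / (2 * n)) := fun τ => by
  have : (2 * n : ℂ) ≠ 0 := by exact_mod_cast (by positivity : (2 * n : ℝ) ≠ 0)
  simp only [Complex.ofReal_add, Complex.ofReal_div, Complex.ofReal_mul, Complex.ofReal_ofNat,
    Complex.ofReal_natCast, mul_add, mul_div_cancel₀ _ this, Complex.sin_add_pi]

theorem antiperiodic_cos_two_mul (hn : n ≠ 0) :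
    Antiperiodic (fun τ : ℝ => Complex.cos (2 * n * τ)) (Real.pi / (2 * n)) := fun τ => by
  have : (2 * n : ℂ) ≠ 0 := by exact_mod_cast (by positivity : (2 * n : ℝ) ≠ 0)
  simp only [Complex.ofReal_add, Complex.ofReal_div, Complex.ofReal_mul, Complex.ofReal_ofNat,
    Complex.ofReal_natCast, mul_add, mul_div_cancel₀ _ this, Complex.cos_add_pi]

theorem norm_sin_two_mul_le_one (τ : ℝ) : ‖Complex.sin (2 * n * τ)‖ ≤ 1 := by
  rw [show (2 * n * τ : ℂ) = ((2 * n * τ : ℝ) : ℂ) by push_cast; ring, ← Complex.ofReal_sin,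
    Complex.norm_real, Real.norm_eq_abs]
  exact Real.abs_sin_le_one _

theorem norm_cos_two_mul_le_one (τ : ℝ) : ‖Complex.cos (2 * n * τ)‖ ≤ 1 := by
  rw [show (2 * n * τ : ℂ) = ((2 * n * τ : ℝ) : ℂ) by push_cast; ring, ← Complex.ofReal_cos,
    Complex.norm_real, Real.norm_eq_abs]
  exact Real.abs_cos_le_one _

theorem integral_sin_two_mul_half_period (hn : n ≠ 0) :
    ∫ τ in 0..Real.pi / (2 * n), Complex.sin (2 * n * τ) = 1 / n := by
  have hn' : (2 * n : ℝ) ≠ 0 := by positivity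
  have hreal : ∫ τ in 0..Real.pi / (2 * n), Real.sin (2 * n * τ) = 1 / n := by
    rw [integral_comp_mul_left Real.sin hn', integral_sin, mul_zero, mul_div_cancel₀ _ hn',
      Real.cos_pi, Real.cos_zero, smul_eq_mul]
    field_simp
    norm_num
  simp_rw [show ∀ τ : ℝ, (2 * n * τ : ℂ) = ((2 * n * τ : ℝ) : ℂ) by intro τ; push_cast; ring,
    ← Complex.ofReal_sin]
  rw [intervalIntegral.integral_ofReal, hreal]
  push_cast
  ring

end Kernels

theorem rseq_congr {u v : ℝ → ℂ} (huv : EqOn u v (Icc 0 Real.pi)) (n : ℕ) :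
    rseq u n = rseq v n := by
  have hπ := Real.pi_pos.le
  have hinner : ∀ t ∈ uIcc 0 Real.pi, ∫ s in 0..t, u s * Complex.sin (2 * n * s)
      = ∫ s in 0..t, v s * Complex.sin (2 * n * s) := fun t ht =>
    integral_congr fun s hs => by
      rw [uIcc_of_le hπ] at ht
      rw [uIcc_of_le ht.1] at hs
      rw [huv ⟨hs.1, hs.2.trans ht.2⟩]
  have houter : EqOn u v (uIcc 0 Real.pi) := uIcc_of_le hπ ▸ huv
  unfold rseq
  refine congrArg₂ (· + ·) (congrArg _ (integral_congr fun t ht => ?_))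
    (congrArg _ (integral_congr fun t ht => ?_))
  · simp only [houter ht, hinner t ht]
  · simp only [houter ht]

theorem rseq_eq {v : ℝ → ℂ} {n : ℕ} (hn : n ≠ 0) (hv : Continuous v) :
    rseq v n = (2 * ((∫ t in 0..Real.pi, v t * Complex.sin (2 * n * t))
      * ∫ t in 0..Real.pi, v t * Complex.cos (2 * n * t))
      - (2 * (∫ τ in 0..Real.pi, Complex.sin (2 * n * τ) * crossCorr v v Real.pi τ)
        - 1 / n * crossCorr v v Real.pi 0)) / (2 * Real.pi) := by
  have hA := two_mul_integral_mul_cos_mul_primitive hv Real.pi_pos.le (2 * n)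
  have hU : ∫ t in 0..Real.pi, v t ^ 2 = crossCorr v v Real.pi 0 := by simp [crossCorr, sq]
  have hnC : (n : ℂ) ≠ 0 := Nat.cast_ne_zero.2 hn
  have hπC : (Real.pi : ℂ) ≠ 0 := Complex.ofReal_ne_zero.2 Real.pi_pos.ne'
  rw [rseq, hU]
  field_simp
  linear_combination (2 * n) * hA

theorem norm_rseq_le {v : ℝ → ℂ} {B ε : ℝ} {n : ℕ} (hn : n ≠ 0) (hv : Continuous v)
    (hB : ∀ x, ‖v x‖ ≤ B) (hε : ∀ x y, |x - y| ≤ Real.pi / (2 * n) → ‖v x - v y‖ ≤ ε) :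
    ‖rseq v n‖ ≤ 6 * (ε + B * (Real.pi / (2 * n))) ^ 2 := by
  set h := Real.pi / (2 * n)
  have hπ := Real.pi_pos
  have hh : 0 < h := by positivity
  have h2h : 2 * h ≤ Real.pi := by
    rw [mul_div_assoc', div_le_iff₀ (by positivity)]
    nlinarith [(Nat.one_le_cast (α := ℝ)).2 (Nat.one_le_iff_ne_zero.2 hn)]
  have hB0 : 0 ≤ B := (norm_nonneg _).trans (hB 0)
  have hε0 : 0 ≤ ε := (norm_nonneg _).trans (hε 0 0 (by simpa using hh.le))
  have hosc : ∀ S : ℝ → ℂ, Antiperiodic S h → Continuous S → (∀ τ, ‖S τ‖ ≤ 1) →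
      ‖∫ t in 0..Real.pi, v t * S t‖ ≤ 2 * (ε + B * h) := fun S hS hSc hS1 => by
    simp_rw [mul_comm (v _)]
    refine (norm_integral_antiperiodic_mul_le (a := 0) hS hSc hS1 hv hh.le (by linarith)
      (fun τ _ => hB τ) (fun τ _ => hε τ (τ - h) (by simp [abs_of_pos hh]))).trans ?_
    nlinarith [Real.pi_le_four]
  have hI := hosc _ (antiperiodic_sin_two_mul hn) (by fun_prop) norm_sin_two_mul_le_one
  have hJ := hosc _ (antiperiodic_cos_two_mul hn) (by fun_prop) norm_cos_two_mul_le_one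
  have hD := norm_two_mul_integral_antiperiodic_mul_crossCorr_sub_le
    (antiperiodic_sin_two_mul hn) (by fun_prop) norm_sin_two_mul_le_one hv hB hε hh.le h2h
  rw [integral_sin_two_mul_half_period hn] at hD
  rw [rseq_eq hn hv, norm_div, show ‖(2 * Real.pi : ℂ)‖ = 2 * Real.pi by
    rw [norm_mul, Complex.norm_two, Complex.norm_real, Real.norm_of_nonneg hπ.le],
    div_le_iff₀ (by positivity)]
  calc _ ≤ 2 * (‖∫ t in 0..Real.pi, v t * Complex.sin (2 * n * t)‖
          * ‖∫ t in 0..Real.pi, v t * Complex.cos (2 * n * t)‖) + _ := by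
        refine (norm_sub_le _ _).trans_eq ?_
        rw [norm_mul, norm_mul, Complex.norm_two]
    _ ≤ 2 * ((2 * (ε + B * h)) * (2 * (ε + B * h)))
        + (Real.pi ^ 2 / 2 + 3 * Real.pi + 3) * (ε + B * h) ^ 2 := by gcongr
    _ ≤ 6 * (ε + B * h) ^ 2 * (2 * Real.pi) := by
        have hη := sq_nonneg (ε + B * h)
        nlinarith [mul_nonneg hη (mul_nonneg hπ.le (sub_nonneg.2 Real.pi_le_four)),
          mul_nonneg hη (sub_nonneg.2 Real.pi_gt_three.le)]

theorem exists_bounded_holder_extension {E : Type*} [SeminormedAddCommGroup E] {a b C α : ℝ}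
    (hab : a ≤ b) (hC : 0 ≤ C) (hα : 0 < α) {u : ℝ → E}
    (hu : ∀ x ∈ Icc a b, ∀ y ∈ Icc a b, ‖u x - u y‖ ≤ C * |x - y| ^ α) :
    ∃ v : ℝ → E, EqOn u v (Icc a b) ∧ (∃ B, ∀ x, ‖v x‖ ≤ B) ∧
      ∀ x y, ‖v x - v y‖ ≤ C * |x - y| ^ α := by
  set v := IccExtend hab (u ∘ Subtype.val)
  have hvH : ∀ x y, ‖v x - v y‖ ≤ C * |x - y| ^ α := norm_IccExtend_sub_le hab hC hα.le hu
  have hvc : Continuous v := continuous_of_norm_sub_le_rpow hα hvH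
  obtain ⟨B, hB⟩ := (isCompact_range (hvc.comp continuous_subtype_val :
    Continuous fun x : Icc a b => v x)).isBounded.exists_norm_le
  refine ⟨v, fun x hx => (IccExtend_of_mem hab (u ∘ Subtype.val) hx).symm,
    ⟨B, fun x => hB _ ⟨projIcc a b hab x, ?_⟩⟩, hvH⟩
  exact (IccExtend_val hab (u ∘ Subtype.val) _).trans (IccExtend_apply hab (u ∘ Subtype.val) x).symm

theorem norm_rseq_le_of_holder {v : ℝ → ℂ} {B C α : ℝ} (hα0 : 0 < α) (hα1 : α ≤ 1)
    (hB : ∀ x, ‖v x‖ ≤ B) (hv : ∀ x y, ‖v x - v y‖ ≤ C * |x - y| ^ α) {n : ℕ} (hn : 1 ≤ n) :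
    ‖rseq v n‖ ≤ 6 * (C + 2 * B) ^ 2 * (Real.pi / 2) ^ (2 * α) * (n : ℝ) ^ (-(2 * α)) := by
  have hπ := Real.pi_pos
  have hn1 : (1 : ℝ) ≤ n := by exact_mod_cast hn
  have hn0 : (0 : ℝ) < n := by linarith
  set h := Real.pi / (2 * n)
  have hh : 0 < h := by positivity
  have hh2 : h ≤ 2 * h ^ α := by
    refine le_two_mul_rpow hh.le ?_ hα0.le hα1
    calc h ≤ Real.pi / 2 := div_le_div_of_nonneg_left hπ.le two_pos (by linarith)
      _ ≤ 2 := by linarith [Real.pi_le_four]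
  have hpow : h ^ (2 * α) = (Real.pi / 2) ^ (2 * α) * (n : ℝ) ^ (-(2 * α)) := by
    rw [show h = Real.pi / 2 * (n : ℝ)⁻¹ by ring, Real.mul_rpow (by positivity) (by positivity),
      Real.inv_rpow hn0.le, Real.rpow_neg hn0.le]
  have hC : 0 ≤ C := by simpa using (norm_nonneg _).trans (hv 1 0)
  have hmod : ∀ x y, |x - y| ≤ h → ‖v x - v y‖ ≤ C * h ^ α := fun x y hxy =>
    (hv x y).trans (by gcongr)
  have hB0 : 0 ≤ B := (norm_nonneg _).trans (hB 0)
  calc ‖rseq v n‖ ≤ 6 * (C * h ^ α + B * h) ^ 2 :=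
        norm_rseq_le (by omega) (continuous_of_norm_sub_le_rpow hα0 hv) hB hmod
    _ ≤ 6 * ((C + 2 * B) * h ^ α) ^ 2 := by
      gcongr
      nlinarith
    _ = _ := by
      rw [mul_pow, ← Real.rpow_mul_natCast hh.le, Nat.cast_ofNat, mul_comm α, hpow]
      ring

theorem rn_estimate_holder
    (α : ℝ) (hα0 : 0 < α) (hα1 : α ≤ 1)
    (u : ℝ → ℂ) (C : ℝ) (hC : 0 < C)
    (hu : ∀ x ∈ Icc (0:ℝ) Real.pi, ∀ y ∈ Icc (0:ℝ) Real.pi,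
      ‖u x - u y‖ ≤ C * |x - y| ^ α) :
    ∃ M > (0:ℝ), ∀ n : ℕ, 1 ≤ n → ‖rseq u n‖ ≤ M * (n:ℝ) ^ (-(2 * α)) := by
  obtain ⟨v, huv, ⟨B, hB⟩, hv⟩ :=
    exists_bounded_holder_extension Real.pi_pos.le hC.le hα0 hu
  have hB0 : 0 ≤ B := (norm_nonneg _).trans (hB 0)
  refine ⟨6 * (C + 2 * B) ^ 2 * (Real.pi / 2) ^ (2 * α), by positivity, fun n hn => ?_⟩
  rw [rseq_congr huv]
  exact norm_rseq_le_of_holder hα0 hα1 hB hv hn
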